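/- Let D be a sequential transducer (a finite transducer whose input automaton is deterministic, with a final output function). For all pairs (u₁,v₁), (u₂,v₂) in the relation ⟦D⟧ realised by D, |Δ(v₁,v₂)| ≤ M_D · (|Δ(u₁,u₂)| + 2), where M_D is the maximal length of an output word labelling a transition or a final output of D. -/

import Mathlib

variable {S G : Type}

def wordFG (w : List G) : FreeGroup G := (w.map FreeGroup.of).prod

def delta (v w : List G) : FreeGroup G := (wordFG v)⁻¹ * wordFG w

def dlen [DecidableEq G] (v w : List G) : ℕ := (delta v w).norm

def wpow (v : List G) (n : ℕ) : List G := (List.replicate n v).flatten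

structure NFT (S G Q : Type) where
  E : Set (Q × S × List G × Q)
  I : Set Q
  F : Set Q
  out : Q → List G

namespace NFT

variable {Q Q₁ Q₂ : Type}

inductive Run (T : NFT S G Q) : Q → List S → List G → Q → Prop
  | nil (q : Q) : Run T q [] [] q
  | cons {q q' q'' : Q} {a : S} {w : List G} {u : List S} {v : List G} :
      (q, a, w, q') ∈ T.E → Run T q' u v q'' → Run T q (a :: u) (w ++ v) q''

def Rel (T : NFT S G Q) (u : List S) (v : List G) : Prop :=
  ∃ i t w, i ∈ T.I ∧ t ∈ T.F ∧ T.Run i u w t ∧ v = w ++ T.out t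

def Trim (T : NFT S G Q) : Prop :=
  ∀ q : Q, ∃ i t u₁ w₁ u₂ w₂, i ∈ T.I ∧ t ∈ T.F ∧ T.Run i u₁ w₁ q ∧ T.Run q u₂ w₂ t

def WTP (T : NFT S G Q) : Prop :=
  ∀ q₁ q₂ (u v : List S) (u₁ u₂ v₁ v₂ : List G), T.Run q₁ u u₁ q₁ → T.Run q₁ v v₁ q₁ →
    T.Run q₁ u u₂ q₂ → T.Run q₂ v v₂ q₂ →
    delta u₁ u₂ = delta (u₁ ++ v₁) (u₂ ++ v₂)

def Seq (T : NFT S G Q) : Prop :=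
  (∃ q₀, T.I = {q₀}) ∧
  ∀ q a w₁ q₁ w₂ q₂, (q, a, w₁, q₁) ∈ T.E → (q, a, w₂, q₂) ∈ T.E → w₁ = w₂ ∧ q₁ = q₂

end NFT

/-! Determinism forces two runs to produce the same output along the longest common prefix of
their inputs, and that common output cancels in the free group. What remains are input
suffixes starting with different letters, which form a reduced word, so their delay is the sum
of their lengths; each input letter contributes at most `M` output letters, and each final
output at most `M` more. -/

lemma wordFG_eq_mk (v : List G) : wordFG v = FreeGroup.mk (v.map fun g => (g, true)) := by
  induction v with
  | nil => rfl
  | cons a v ih =>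
    rw [wordFG, List.map_cons, List.prod_cons, ← wordFG, ih, FreeGroup.of, FreeGroup.mul_mk]
    rfl

lemma wordFG_append (v w : List G) : wordFG (v ++ w) = wordFG v * wordFG w := by
  simp [wordFG]

lemma delta_eq_mk (v w : List G) :
    delta v w = FreeGroup.mk (v.reverse.map (fun g => (g, false)) ++ w.map fun g => (g, true)) := by
  simp [delta, wordFG_eq_mk, FreeGroup.inv_mk, FreeGroup.mul_mk, FreeGroup.invRev,
    List.map_reverse, Function.comp_def]

section dlen

variable [DecidableEq G]

lemma dlen_append_left (p v w : List G) : dlen (p ++ v) (p ++ w) = dlen v w := by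
  simp [dlen, delta, wordFG_append, mul_assoc]

lemma dlen_cons_cons (a : G) (v w : List G) : dlen (a :: v) (a :: w) = dlen v w :=
  dlen_append_left [a] v w

lemma dlen_le_length_add_length (v w : List G) : dlen v w ≤ v.length + w.length := by
  rw [dlen, delta_eq_mk]
  exact FreeGroup.norm_mk_le.trans (by simp)

lemma dlen_eq_length_add_length {v w : List G} (hne : ∀ x ∈ v.head?, ∀ y ∈ w.head?, x ≠ y) :
    dlen v w = v.length + w.length := by
  have hred : FreeGroup.IsReduced
      (v.reverse.map (fun g => (g, false)) ++ w.map fun g => (g, true)) := by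
    refine List.isChain_append.mpr ⟨?_, ?_, ?_⟩
    · exact (List.isChain_map _).2 (List.pairwise_of_forall (by simp)).isChain
    · exact (List.isChain_map _).2 (List.pairwise_of_forall (by simp)).isChain
    · simp only [List.getLast?_map, List.getLast?_reverse, List.head?_map, Option.mem_def,
        Option.map_eq_some_iff]
      rintro _ ⟨x, hx, rfl⟩ _ ⟨y, hy, rfl⟩ hxy
      exact absurd hxy (hne x hx y hy)
  rw [dlen, delta_eq_mk, FreeGroup.norm, FreeGroup.toWord_mk, hred.reduce_eq]
  simp

end dlen

namespace NFT

variable {Q : Type} {D : NFT S G Q} {M : ℕ}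

lemma Run.length_le (hME : ∀ q a (w : List G) q', (q, a, w, q') ∈ D.E → w.length ≤ M)
    {q t : Q} {u : List S} {w : List G} (h : D.Run q u w t) : w.length ≤ M * u.length := by
  induction h with
  | nil => simp
  | cons hE _ ih =>
    simp only [List.length_append, List.length_cons, Nat.mul_succ]
    linarith [hME _ _ _ _ hE]

variable [DecidableEq S] [DecidableEq G]
  (hME : ∀ q a (w : List G) q', (q, a, w, q') ∈ D.E → w.length ≤ M)
  (hMf : ∀ t ∈ D.F, (D.out t).length ≤ M)
include hME hMf

lemma dlen_output_le_of_head_ne {q₁ q₂ t₁ t₂ : Q} {u₁ u₂ : List S} {w₁ w₂ : List G}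
    (h₁ : D.Run q₁ u₁ w₁ t₁) (h₂ : D.Run q₂ u₂ w₂ t₂) (ht₁ : t₁ ∈ D.F) (ht₂ : t₂ ∈ D.F)
    (hne : ∀ x ∈ u₁.head?, ∀ y ∈ u₂.head?, x ≠ y) :
    dlen (w₁ ++ D.out t₁) (w₂ ++ D.out t₂) ≤ M * (dlen u₁ u₂ + 2) := by
  have hw₁ := h₁.length_le hME
  have hw₂ := h₂.length_le hME
  have ho₁ := hMf t₁ ht₁
  have ho₂ := hMf t₂ ht₂
  calc dlen (w₁ ++ D.out t₁) (w₂ ++ D.out t₂)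
      ≤ (w₁ ++ D.out t₁).length + (w₂ ++ D.out t₂).length := dlen_le_length_add_length _ _
    _ ≤ M * u₁.length + M + (M * u₂.length + M) := by simp only [List.length_append]; omega
    _ = M * (dlen u₁ u₂ + 2) := by rw [dlen_eq_length_add_length hne]; ring

lemma Seq.dlen_output_le (hseq : D.Seq) {q t₁ t₂ : Q} {u₁ u₂ : List S} {w₁ w₂ : List G}
    (h₁ : D.Run q u₁ w₁ t₁) (h₂ : D.Run q u₂ w₂ t₂) (ht₁ : t₁ ∈ D.F) (ht₂ : t₂ ∈ D.F) :
    dlen (w₁ ++ D.out t₁) (w₂ ++ D.out t₂) ≤ M * (dlen u₁ u₂ + 2) := by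
  induction h₁ generalizing u₂ w₂ with
  | nil => exact dlen_output_le_of_head_ne hME hMf (.nil _) h₂ ht₁ ht₂ (by simp)
  | @cons _ _ _ a _ _ _ hE hr ih =>
    cases h₂ with
    | nil => exact dlen_output_le_of_head_ne hME hMf (.cons hE hr) (.nil _) ht₁ ht₂ (by simp)
    | @cons _ _ _ b _ _ _ hE' hr' =>
      by_cases hab : a = b
      · subst hab
        obtain ⟨rfl, rfl⟩ := hseq.2 _ _ _ _ _ _ hE hE'
        rw [List.append_assoc, List.append_assoc, dlen_append_left, dlen_cons_cons]
        exact ih hr' ht₁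
      · exact dlen_output_le_of_head_ne hME hMf (.cons hE hr) (.cons hE' hr') ht₁ ht₂
          (by simpa using hab)

end NFT

/-- Bounded variation of sequential transducers: for pairs `(u₁,v₁), (u₂,v₂)` realised by a
sequential transducer `D`, `|Δ(v₁,v₂)| ≤ M_D · (|Δ(u₁,u₂)| + 2)`. -/
theorem bounded_variation [DecidableEq S] [DecidableEq G] {Q : Type}
    (D : NFT S G Q) (hseq : D.Seq) (M : ℕ)
    (hME : ∀ q a (w : List G) q', (q, a, w, q') ∈ D.E → w.length ≤ M)
    (hMf : ∀ t ∈ D.F, (D.out t).length ≤ M)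
    (u₁ u₂ : List S) (v₁ v₂ : List G)
    (h₁ : D.Rel u₁ v₁) (h₂ : D.Rel u₂ v₂) :
    dlen v₁ v₂ ≤ M * (dlen u₁ u₂ + 2) := by
  obtain ⟨q₀, hI⟩ := hseq.1
  obtain ⟨i₁, t₁, w₁, hi₁, ht₁, hr₁, rfl⟩ := h₁
  obtain ⟨i₂, t₂, w₂, hi₂, ht₂, hr₂, rfl⟩ := h₂
  rw [hI, Set.mem_singleton_iff] at hi₁ hi₂
  subst hi₁ hi₂
  exact hseq.dlen_output_le hME hMf hr₁ hr₂ ht₁ ht₂
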